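/- Let G be a connected graph and let (T, 𝒳) be a tree-cut decomposition of G of finite adhesion whose parts are precisely the ω-edge blocks of G and such that for every edge t₁t₂ of T there is an edge of G between X_{t₁} and X_{t₂}. Let R be a ray in G and let t be a node of T such that for every edge e of T, some tail of R is contained in ⋃_{s ∈ T_e(t)} X_s, where T_e(t) denotes the component of T − e containing t. Then the set of vertices of G that edge-dominate R is exactly X_t. -/

import Mathlib

/-- The set of edges of `G` with one endpoint in `A` and the other in `B`. -/
def edgesBetween {V : Type*} (G : SimpleGraph V) (A B : Set V) : Set (Sym2 V) :=
  {e | e ∈ G.edgeSet ∧ ∃ x ∈ A, ∃ y ∈ B, e = s(x, y)}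

/-- `x ~ y` iff no finite set of edges of `G` separates `x` from `y`. -/
def OmegaEquiv {V : Type*} (G : SimpleGraph V) (x y : V) : Prop :=
  ∀ F : Set (Sym2 V), F.Finite → (G.deleteEdges F).Reachable x y

/-- The ω-edge blocks of `G` are the equivalence classes of `OmegaEquiv`. -/
def IsOmegaEdgeBlock {V : Type*} (G : SimpleGraph V) (B : Set V) : Prop :=
  ∃ x, B = {y | OmegaEquiv G x y}

/-- Given a tree-cut decomposition `(T, X)` and an edge `t₁t₂` of `T`, the union of the parts
indexed by the component of `T - t₁t₂` containing `t₁`. -/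
def side {τ V : Type*} (T : SimpleGraph τ) (X : τ → Set V) (t₁ t₂ : τ) : Set V :=
  ⋃ t ∈ {u | (T.deleteEdges {s(t₁, t₂)}).Reachable t₁ u}, X t

/-- A region of `G` is (the vertex set of) a connected subgraph with finite edge boundary. -/
def IsRegion {V : Type*} (G : SimpleGraph V) (C : Set V) : Prop :=
  (G.induce C).Connected ∧ (edgesBetween G C Cᶜ).Finite

/-- A ray in `G` is an injective one-way infinite path. -/
def IsRay {V : Type*} (G : SimpleGraph V) (f : ℕ → V) : Prop :=
  Function.Injective f ∧ ∀ n, G.Adj (f n) (f (n + 1))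

/-- A vertex `v` edge-dominates a ray `R` if for every finite edge set `F`, `v` lies in the
same component of `G - F` as some tail of `R`. -/
def EdgeDominates {V : Type*} (G : SimpleGraph V) (v : V) (R : ℕ → V) : Prop :=
  ∀ F : Set (Sym2 V), F.Finite → ∃ m, ∀ n ≥ m, (G.deleteEdges F).Reachable v (R n)

section Helpers

variable {V τ : Type*} {G : SimpleGraph V} {T : SimpleGraph τ} {X : τ → Set V}

lemma omegaEquiv_refl (x : V) : OmegaEquiv G x x := fun _ _ => SimpleGraph.Reachable.refl x

lemma omegaEquiv_symm {x y : V} (h : OmegaEquiv G x y) : OmegaEquiv G y x :=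
  fun F hF => (h F hF).symm

lemma omegaEquiv_trans {x y z : V} (h1 : OmegaEquiv G x y) (h2 : OmegaEquiv G y z) :
    OmegaEquiv G x z := fun F hF => (h1 F hF).trans (h2 F hF)

lemma part_equiv (hblocks : ∀ t, IsOmegaEdgeBlock G (X t)) {t : τ} {x y : V}
    (hx : x ∈ X t) (hy : y ∈ X t) : OmegaEquiv G x y := by
  obtain ⟨z, hz⟩ := hblocks t
  rw [hz] at hx hy
  exact omegaEquiv_trans (omegaEquiv_symm hx) hy

lemma exists_part (hsurj : ∀ B : Set V, IsOmegaEdgeBlock G B → ∃ t, X t = B) (v : V) :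
    ∃ t, v ∈ X t := by
  obtain ⟨t, ht⟩ := hsurj {y | OmegaEquiv G v y} ⟨v, rfl⟩
  exact ⟨t, ht ▸ omegaEquiv_refl v⟩

lemma part_unique (hblocks : ∀ t, IsOmegaEdgeBlock G (X t)) (hinj : Function.Injective X)
    {t₁ t₂ : τ} {v : V} (h1 : v ∈ X t₁) (h2 : v ∈ X t₂) : t₁ = t₂ := by
  apply hinj
  obtain ⟨z₁, hz₁⟩ := hblocks t₁
  obtain ⟨z₂, hz₂⟩ := hblocks t₂
  rw [hz₁] at h1 ⊢
  rw [hz₂] at h2 ⊢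
  ext y
  simp only [Set.mem_setOf_eq] at *
  exact ⟨fun h => omegaEquiv_trans h2 (omegaEquiv_trans (omegaEquiv_symm h1) h),
         fun h => omegaEquiv_trans h1 (omegaEquiv_trans (omegaEquiv_symm h2) h)⟩

lemma reach_of_delete (u v : τ) {a b : τ} (p : T.Walk a b) :
    (T.deleteEdges {s(u,v)}).Reachable a b ∨
    ((T.deleteEdges {s(u,v)}).Reachable a u ∧ (T.deleteEdges {s(u,v)}).Reachable v b) ∨
    ((T.deleteEdges {s(u,v)}).Reachable a v ∧ (T.deleteEdges {s(u,v)}).Reachable u b) := by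
  induction p with
  | nil => exact Or.inl (SimpleGraph.Reachable.refl _)
  | @cons a c b h p ih =>
    by_cases he : s(a, c) = s(u, v)
    · rw [Sym2.eq_iff] at he
      rcases he with ⟨rfl, rfl⟩ | ⟨rfl, rfl⟩
      · rcases ih with h1 | ⟨h1, h2⟩ | ⟨h1, h2⟩
        · exact Or.inr (Or.inl ⟨SimpleGraph.Reachable.refl _, h1⟩)
        · exact Or.inl (h1.symm.trans h2)
        · exact Or.inl h2
      · rcases ih with h1 | ⟨h1, h2⟩ | ⟨h1, h2⟩
        · exact Or.inr (Or.inr ⟨SimpleGraph.Reachable.refl _, h1⟩)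
        · exact Or.inl h2
        · exact Or.inl (h1.symm.trans h2)
    · have hadj : (T.deleteEdges {s(u,v)}).Adj a c :=
        SimpleGraph.deleteEdges_adj.mpr ⟨h, by simpa using he⟩
      rcases ih with h1 | ⟨h1, h2⟩ | ⟨h1, h2⟩
      · exact Or.inl (hadj.reachable.trans h1)
      · exact Or.inr (Or.inl ⟨hadj.reachable.trans h1, h2⟩)
      · exact Or.inr (Or.inr ⟨hadj.reachable.trans h1, h2⟩)

lemma tree_bridge (hT : T.IsTree) {u v : τ} (h : T.Adj u v) :
    ¬ (T.deleteEdges {s(u,v)}).Reachable u v := by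
  have hb := (SimpleGraph.isAcyclic_iff_forall_adj_isBridge.mp hT.2) h
  rw [SimpleGraph.isBridge_iff] at hb
  exact hb

lemma mem_side {u v a : τ} {x : V} (h : (T.deleteEdges {s(u,v)}).Reachable u a)
    (hx : x ∈ X a) : x ∈ side T X u v := Set.mem_biUnion h hx

lemma mem_side' {b t a : τ} {x : V} (h : (T.deleteEdges {s(t,b)}).Reachable b a)
    (hx : x ∈ X a) : x ∈ side T X b t := by
  refine Set.mem_biUnion ?_ hx
  show (T.deleteEdges {s(b,t)}).Reachable b a
  rwa [Sym2.eq_swap]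

lemma side_mem_iff {u v : τ} {x : V} :
    x ∈ side T X u v ↔ ∃ a, (T.deleteEdges {s(u,v)}).Reachable u a ∧ x ∈ X a := by
  simp [side, Set.mem_iUnion]

lemma side_cover (hTc : T.Connected)
    (hsurj : ∀ B : Set V, IsOmegaEdgeBlock G B → ∃ t, X t = B)
    (u v : τ) (x : V) : x ∈ side T X u v ∨ x ∈ side T X v u := by
  obtain ⟨a, ha⟩ := exists_part (G := G) (X := X) hsurj x
  obtain ⟨p⟩ := hTc.preconnected u a
  rcases reach_of_delete u v p with h | ⟨_, h2⟩ | ⟨h1, h2⟩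
  · exact Or.inl (mem_side h ha)
  · exact Or.inr (mem_side' h2 ha)
  · exact Or.inl (mem_side h2 ha)

lemma side_disjoint (hT : T.IsTree) (hblocks : ∀ t, IsOmegaEdgeBlock G (X t))
    (hinj : Function.Injective X) {u v : τ} (h : T.Adj u v) {x : V}
    (h1 : x ∈ side T X u v) (h2 : x ∈ side T X v u) : False := by
  obtain ⟨a1, hr1, hx1⟩ := side_mem_iff.mp h1
  obtain ⟨a2, hr2, hx2⟩ := side_mem_iff.mp h2
  have : a1 = a2 := part_unique hblocks hinj hx1 hx2
  subst this
  rw [Sym2.eq_swap] at hr2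
  exact tree_bridge hT h (hr1.trans hr2.symm)

end Helpers

section Helpers2

variable {V τ : Type*} {G : SimpleGraph V} {T : SimpleGraph τ} {X : τ → Set V}

/-- If `F` contains all edges between the two sides, then a walk in `G - F` starting on the
`v`-side stays on the `v`-side. -/
lemma reach_stays_side (hblocks : ∀ t, IsOmegaEdgeBlock G (X t))
    (hTc : T.Connected)
    (hsurj : ∀ B : Set V, IsOmegaEdgeBlock G B → ∃ t, X t = B)
    {u v : τ} {F : Set (Sym2 V)}
    (hF : edgesBetween G (side T X u v) (side T X v u) ⊆ F)
    {x y : V} (h : (G.deleteEdges F).Reachable x y) (hx : x ∈ side T X v u) :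
    y ∈ side T X v u := by
  obtain ⟨p⟩ := h
  revert hx
  induction p with
  | nil => exact id
  | @cons x c y hadj p ih =>
    intro hx
    apply ih
    rcases side_cover (G := G) hTc hsurj u v c with hc | hc
    · exfalso
      have hmem : s(x, c) ∈ edgesBetween G (side T X u v) (side T X v u) := by
        refine ⟨G.mem_edgeSet.mpr ((SimpleGraph.deleteEdges_adj.mp hadj).1), c, hc, x, hx, Sym2.eq_swap⟩
      exact (SimpleGraph.deleteEdges_adj.mp hadj).2 (hF hmem)
    · exact hc

/-- For `a ≠ t` in a tree there is a neighbour `β` of `t` and a walk from `β` to `a`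
avoiding `t`. -/
lemma exists_nbr (hT : T.IsTree) {t a : τ} (hne : a ≠ t) :
    ∃ β, T.Adj t β ∧ ∃ q : T.Walk β a, t ∉ q.support := by
  classical
  obtain ⟨w⟩ := hT.1.preconnected t a
  obtain ⟨p, hp⟩ : ∃ p : T.Walk t a, p.IsPath := ⟨w.toPath, w.toPath.2⟩
  cases p with
  | nil => exact absurd rfl hne.symm
  | cons hadj q =>
    rw [SimpleGraph.Walk.cons_isPath_iff] at hp
    exact ⟨_, hadj, q, hp.2⟩

/-- Chain lemma: inside the `b`-side of the tree edge `tb`, if no vertex of that side is an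
endpoint of an edge of `F`, then vertices of parts on that side are joined in `G - F`. -/
lemma chain_reach (hblocks : ∀ t, IsOmegaEdgeBlock G (X t))
    (hedge : ∀ t₁ t₂, T.Adj t₁ t₂ → ∃ x ∈ X t₁, ∃ y ∈ X t₂, G.Adj x y)
    {F : Set (Sym2 V)} (hFfin : F.Finite) {b t : τ}
    (hfree : ∀ z ∈ side T X b t, ∀ e ∈ F, z ∉ e) :
    ∀ {a c : τ} (_ : (T.deleteEdges {s(t,b)}).Walk a c),
      (T.deleteEdges {s(t,b)}).Reachable b a →
      ∀ {ya yc : V}, ya ∈ X a → yc ∈ X c → (G.deleteEdges F).Reachable ya yc := by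
  intro a c p
  induction p with
  | nil =>
    intro _ ya yc hya hyc
    exact part_equiv hblocks hya hyc F hFfin
  | @cons a d c hadj p ih =>
    intro hba ya yc hya hyc
    have hTd : T.Adj a d := (SimpleGraph.deleteEdges_adj.mp hadj).1
    obtain ⟨x, hx, y, hy, hxy⟩ := hedge a d hTd
    have hxside : x ∈ side T X b t := mem_side' hba hx
    have r1 : (G.deleteEdges F).Reachable ya x := part_equiv hblocks hya hx F hFfin
    have hnF : s(x, y) ∉ F := fun hmem => hfree x hxside _ hmem (Sym2.mem_iff.mpr (Or.inl rfl))
    have r2 : (G.deleteEdges F).Adj x y := SimpleGraph.deleteEdges_adj.mpr ⟨hxy, hnF⟩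
    have r3 : (G.deleteEdges F).Reachable y yc :=
      ih (hba.trans hadj.reachable) hy hyc
    exact r1.trans (r2.reachable.trans r3)

end Helpers2

/-- Given a tree-cut decomposition of finite adhesion into the ω-edge blocks of a connected
graph (with adjacent parts joined by edges), if a ray `R` has, for every tree edge `e`, a tail
in the union of the parts over the component of `T - e` containing a fixed node `t`, then the
vertices edge-dominating `R` are exactly those in the part `X t`. -/
theorem edgeDominating_vertices_eq_part {V τ : Type*} (G : SimpleGraph V)
    (hG : G.Connected)
    (T : SimpleGraph τ) (hT : T.IsTree) (X : τ → Set V)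
    (hblocks : ∀ t, IsOmegaEdgeBlock G (X t))
    (hinj : Function.Injective X)
    (hsurj : ∀ B : Set V, IsOmegaEdgeBlock G B → ∃ t, X t = B)
    (hadhesion : ∀ t₁ t₂, T.Adj t₁ t₂ →
      (edgesBetween G (side T X t₁ t₂) (side T X t₂ t₁)).Finite)
    (hedge : ∀ t₁ t₂, T.Adj t₁ t₂ → ∃ x ∈ X t₁, ∃ y ∈ X t₂, G.Adj x y)
    (R : ℕ → V) (hR : IsRay G R) (t : τ)
    (htail : ∀ u v : τ, T.Adj u v → ∃ m, ∀ n ≥ m,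
      R n ∈ ⋃ s ∈ {w | (T.deleteEdges {s(u, v)}).Reachable t w}, X s) :
    {v : V | EdgeDominates G v R} = X t := by
  classical
  ext v
  simp only [Set.mem_setOf_eq]
  constructor
  · intro hdom
    obtain ⟨s, hs⟩ := exists_part (G := G) (X := X) hsurj v
    by_cases hst : s = t
    · rwa [hst] at hs
    · exfalso
      obtain ⟨β, hβ, q, hq⟩ := exists_nbr hT hst
      obtain ⟨m₁, hm₁⟩ := hdom (edgesBetween G (side T X t β) (side T X β t))
        (hadhesion t β hβ)
      obtain ⟨m₂, hm₂⟩ := htail t β hβ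
      have h1 := hm₁ (max m₁ m₂) (le_max_left _ _)
      have h2 : R (max m₁ m₂) ∈ side T X t β := hm₂ _ (le_max_right _ _)
      have hreach : (T.deleteEdges {s(t,β)}).Reachable β s := by
        refine ⟨q.toDeleteEdges _ ?_⟩
        intro e he hmem
        rw [Set.mem_singleton_iff] at hmem
        subst hmem
        exact hq (q.fst_mem_support_of_mem_edges he)
      have hv_side : v ∈ side T X β t := mem_side' hreach hs
      have h3 : R (max m₁ m₂) ∈ side T X β t :=
        reach_stays_side hblocks hT.1 hsurj subset_rfl h1 hv_side
      exact side_disjoint hT hblocks hinj hβ h2 h3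
  · intro hv F hFfin
    have hmemfin : ∀ e : Sym2 V, {z : V | z ∈ e}.Finite := by
      intro e
      induction e using Sym2.ind with
      | _ x y =>
        have hxy : {z : V | z ∈ s(x,y)} = {x, y} := by
          ext z; simp [Sym2.mem_iff]
        rw [hxy]; exact (Set.finite_singleton y).insert x
    set W : Set V := {z | ∃ e ∈ F, z ∈ e} with hWdef
    have hW : W.Finite := by
      have hWU : W = ⋃ e ∈ F, {z : V | z ∈ e} := by
        ext z; simp [hWdef]
      rw [hWU]
      exact hFfin.biUnion fun e _ => hmemfin e
    set A : Set τ := {a | ∃ z ∈ W, z ∈ X a} with hAdef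
    let f : τ → V := fun a => if h : a ∈ A then h.choose else R 0
    have hfW : ∀ a ∈ A, f a ∈ W ∧ f a ∈ X a := by
      intro a ha
      simp only [f, dif_pos ha]
      exact ha.choose_spec
    have hA : A.Finite := by
      apply Set.Finite.of_finite_image (f := f)
      · exact hW.subset (by rintro _ ⟨a, ha, rfl⟩; exact (hfW a ha).1)
      · intro a ha a' ha' hEq
        exact part_unique hblocks hinj ((hfW a ha).2) (hEq ▸ (hfW a' ha').2)
    let nbr : τ → τ := fun a => if h : a ≠ t then (exists_nbr hT h).choose else t
    have nbr_spec : ∀ a, a ≠ t → T.Adj t (nbr a) ∧ ∃ q : T.Walk (nbr a) a, t ∉ q.support := by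
      intro a h
      have hEq : nbr a = (exists_nbr hT h).choose := dif_pos h
      rw [hEq]
      exact (exists_nbr hT h).choose_spec
    let mfun : τ → ℕ := fun a => if h : T.Adj t (nbr a) then (htail t (nbr a) h).choose else 0
    have mfun_spec : ∀ a, ∀ (h : T.Adj t (nbr a)), ∀ n ≥ mfun a,
        R n ∈ ⋃ s' ∈ {w | (T.deleteEdges {s(t, nbr a)}).Reachable t w}, X s' := by
      intro a h
      simp only [mfun, dif_pos h]
      exact (htail t (nbr a) h).choose_spec
    obtain ⟨m, hm⟩ := (hA.image mfun).bddAbove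
    refine ⟨m, fun n hn => ?_⟩
    obtain ⟨sn, hsn⟩ := exists_part (G := G) (X := X) hsurj (R n)
    by_cases hst : sn = t
    · exact part_equiv hblocks hv (hst ▸ hsn) F hFfin
    · obtain ⟨b, htb, q, hq⟩ := exists_nbr hT hst
      have hqedges : ∀ e ∈ q.edges, e ∉ ({s(t,b)} : Set (Sym2 τ)) := by
        intro e he hmem
        rw [Set.mem_singleton_iff] at hmem
        subst hmem
        exact hq (q.fst_mem_support_of_mem_edges he)
      have hreach_bs : (T.deleteEdges {s(t,b)}).Reachable b sn := ⟨q.toDeleteEdges _ hqedges⟩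
      have hfree : ∀ z ∈ side T X b t, ∀ e ∈ F, z ∉ e := by
        intro z hz e heF hze
        obtain ⟨a, hba, hza⟩ := side_mem_iff.mp hz
        rw [Sym2.eq_swap] at hba
        have haA : a ∈ A := ⟨z, ⟨e, heF, hze⟩, hza⟩
        have hat : a ≠ t := by
          rintro rfl
          exact tree_bridge hT htb hba.symm
        obtain ⟨hadj_nbr, qa, hqa⟩ := nbr_spec a hat
        by_cases hbb : nbr a = b
        · have hmle : mfun a ≤ n := le_trans (hm ⟨a, haA, rfl⟩) hn
          have hRn := mfun_spec a hadj_nbr n hmle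
          rw [hbb] at hRn
          have hRn' : R n ∈ side T X t b := hRn
          have hRn2 : R n ∈ side T X b t := mem_side' hreach_bs hsn
          exact side_disjoint hT hblocks hinj htb hRn' hRn2
        · have hqa_edges : ∀ e' ∈ (SimpleGraph.Walk.cons hadj_nbr qa).edges,
              e' ∉ ({s(t,b)} : Set (Sym2 τ)) := by
            intro e' he' hmem
            rw [Set.mem_singleton_iff] at hmem
            subst hmem
            rw [SimpleGraph.Walk.edges_cons, List.mem_cons] at he'
            rcases he' with h' | h'
            · rw [Sym2.eq_iff] at h'
              rcases h' with ⟨-, h'⟩ | ⟨h', -⟩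
              · exact hbb h'.symm
              · exact hadj_nbr.ne h'
            · exact hqa (qa.fst_mem_support_of_mem_edges h')
          have hta : (T.deleteEdges {s(t,b)}).Reachable t a :=
            ⟨(SimpleGraph.Walk.cons hadj_nbr qa).toDeleteEdges _ hqa_edges⟩
          exact tree_bridge hT htb (hta.trans hba.symm)
      obtain ⟨x, hx, y, hy, hxy⟩ := hedge t b htb
      have r1 : (G.deleteEdges F).Reachable v x := part_equiv hblocks hv hx F hFfin
      have hyside : y ∈ side T X b t := mem_side' (SimpleGraph.Reachable.refl b) hy
      have hnF : s(x, y) ∉ F := fun hmem =>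
        hfree y hyside _ hmem (Sym2.mem_iff.mpr (Or.inr rfl))
      have r2 : (G.deleteEdges F).Adj x y := SimpleGraph.deleteEdges_adj.mpr ⟨hxy, hnF⟩
      have r3 : (G.deleteEdges F).Reachable y (R n) :=
        chain_reach hblocks hedge hFfin hfree (q.toDeleteEdges _ hqedges)
          (SimpleGraph.Reachable.refl b) hy hsn
      exact r1.trans (r2.reachable.trans r3)
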